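/- For all n ≥ 1, (∂_z + ∂_w) I_n = (ν − 2α)·n·I_{n−1} and (∂_z − ∂_w) I_n = −(ν + 2α)·n·I_{n−1}. -/
import Mathlib


open MvPolynomial

noncomputable def Ipoly (ν α ξ : ℂ) : ℕ → MvPolynomial (Fin 2) ℂ
  | 0 => 1
  | 1 => C ν * X 1 - C (2 * α) * X 0 - C ξ
  | (n + 2) => (C ν * X 1 - C (2 * α) * X 0 - C ξ) * Ipoly ν α ξ (n + 1)
      + C (2 * α * (n + 1)) * Ipoly ν α ξ n

lemma Ipoly_mul (ν α ξ : ℂ) (n : ℕ) :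
    (C ν * X 1 - C (2 * α) * X 0 - C ξ) * Ipoly ν α ξ n
      = Ipoly ν α ξ (n + 1) - C (2 * α * n) * Ipoly ν α ξ (n - 1) := by
  cases n with
  | zero => simp [Ipoly]
  | succ m =>
      show _ = Ipoly ν α ξ (m + 2) - _
      rw [Ipoly]
      push_cast
      ring

lemma Ipoly_deriv (ν α ξ : ℂ) : ∀ n : ℕ,
    pderiv 0 (Ipoly ν α ξ n) + pderiv 1 (Ipoly ν α ξ n) =
        C ((ν - 2 * α) * n) * Ipoly ν α ξ (n - 1) ∧
      pderiv 0 (Ipoly ν α ξ n) - pderiv 1 (Ipoly ν α ξ n) =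
        C (-(ν + 2 * α) * n) * Ipoly ν α ξ (n - 1)
  | 0 => by simp [Ipoly]
  | 1 => by constructor <;> (simp [Ipoly, pderiv_X]; ring_nf)
  | (n + 2) => by
      obtain ⟨h1, h2⟩ := Ipoly_deriv ν α ξ (n + 1)
      obtain ⟨g1, g2⟩ := Ipoly_deriv ν α ξ n
      have hm := Ipoly_mul ν α ξ n
      have d0 : pderiv (0 : Fin 2) (C ν * X 1 - C (2 * α) * X 0 - C ξ) = -C (2 * α) := by
        simp [pderiv_X]
      have d1 : pderiv (1 : Fin 2) (C ν * X 1 - C (2 * α) * X 0 - C ξ) = C ν := by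
        simp [pderiv_X]
      simp only [show n + 1 - 1 = n from rfl, show n + 2 - 1 = n + 1 from rfl] at *
      constructor <;>
        rw [Ipoly, map_add, map_add, pderiv_mul, pderiv_mul, pderiv_mul, pderiv_mul, d0, d1,
          pderiv_C, pderiv_C] <;>
        simp only [map_mul, map_sub, map_add, map_neg, Nat.cast_add, Nat.cast_ofNat,
          Nat.cast_one, map_one, map_ofNat, zero_mul, add_zero] at *
      · linear_combination (C ν * X 1 - (2 : MvPolynomial (Fin 2) ℂ) * C α * X 0 - C ξ) * h1 +
          ((2 : MvPolynomial (Fin 2) ℂ) * C α * (C (n : ℂ) + 1)) * g1 +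
          ((C ν - 2 * C α) * (C (n : ℂ) + 1)) * hm
      · linear_combination (C ν * X 1 - (2 : MvPolynomial (Fin 2) ℂ) * C α * X 0 - C ξ) * h2 +
          ((2 : MvPolynomial (Fin 2) ℂ) * C α * (C (n : ℂ) + 1)) * g2 +
          (-(C ν + 2 * C α) * (C (n : ℂ) + 1)) * hm

theorem stmt15 (ν α ξ : ℂ) (n : ℕ) (hn : 1 ≤ n) :
    pderiv 0 (Ipoly ν α ξ n) + pderiv 1 (Ipoly ν α ξ n) =
        C ((ν - 2 * α) * n) * Ipoly ν α ξ (n - 1) ∧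
      pderiv 0 (Ipoly ν α ξ n) - pderiv 1 (Ipoly ν α ξ n) =
        C (-(ν + 2 * α) * n) * Ipoly ν α ξ (n - 1) := Ipoly_deriv ν α ξ n
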